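/- Let H be the divided-power bialgebra over R with basis D⁽ⁱ⁾ for i ≥ 0, multiplication D⁽ⁱ⁾D⁽ʲ⁾ = C(i+j,i) D⁽ⁱ⁺ʲ⁾, and coproduct Δ(D⁽ⁱ⁾) = Σⱼ D⁽ʲ⁾⊗D⁽ⁱ⁻ʲ⁾. If M = S*(Φ) is the symmetric algebra of an R-module Φ, then the universal measuring algebra satisfies H(S*(Φ)) ≅ S*(H⊗Φ). -/

import Mathlib

open TensorProduct Coalgebra

/-- A bundled commutative algebra over `R`. -/
structure CommAlgebraOver (R : Type) [CommRing R] : Type 1 where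
  carrier : Type
  [commRing : CommRing carrier]
  [algebra : Algebra R carrier]

attribute [instance] CommAlgebraOver.commRing CommAlgebraOver.algebra

/-- The map `φ : H ⊗ M → A`, `(h, m) ↦ h(m)`, satisfies `h(mn) = Σ h'(m)h''(n)`
and `h(1) = η(h)·1`. -/
def Measures (R H M A : Type) [CommRing R] [AddCommGroup H] [Module R H]
    [Coalgebra R H] [CommRing M] [Algebra R M] [CommRing A] [Algebra R A]
    (φ : H →ₗ[R] M →ₗ[R] A) : Prop :=
  (∀ h : H, φ h 1 = algebraMap R A (counit (R := R) h)) ∧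
  (∀ (h : H) (m n : M) (ι : Type) (t : Finset ι) (h₁ h₂ : ι → H),
    comul (R := R) h = ∑ i ∈ t, h₁ i ⊗ₜ[R] h₂ i →
    φ h (m * n) = ∑ i ∈ t, φ (h₁ i) m * φ (h₂ i) n)

/-- `P` together with `ιP : Φ → P` is the symmetric algebra `S*(Φ)`: it is
universal among commutative `R`-algebras receiving a linear map from `Φ`. -/
def IsSymmetricAlgebraUniv (R Φ P : Type) [CommRing R] [AddCommGroup Φ] [Module R Φ]
    [CommRing P] [Algebra R P] (ιP : Φ →ₗ[R] P) : Prop :=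
  ∀ (B : CommAlgebraOver R) (g : Φ →ₗ[R] B.carrier),
    ∃! f : P →ₐ[R] B.carrier, ∀ x : Φ, f (ιP x) = g x

/-! Measurings `H ⊗ M → B` are the same as algebra maps from `M` into `Hom(H, B)` with the
convolution product, which is commutative because the divided-power coalgebra is cocommutative
(the formula for `Δ(D⁽ⁿ⁾)` is symmetric).
For `M = S*(Φ)` these are the linear maps `Φ → Hom(H, B) = Hom(H ⊗ Φ, B)`, i.e. the algebra maps
`S*(H ⊗ Φ) → B`. So `S*(H ⊗ Φ)` has the universal property of `H(S*(Φ))`. -/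

lemma isCocomm_of_comul_basis {R H : Type*} [CommSemiring R] [AddCommMonoid H] [Module R H]
    [Coalgebra R H] (b : Module.Basis ℕ R H)
    (hb : ∀ n : ℕ, comul (R := R) (b n) = ∑ i ∈ Finset.range (n + 1), b i ⊗ₜ[R] b (n - i)) :
    IsCocomm R H where
  comm_comp_comul := b.ext fun n => by
    simp only [LinearMap.comp_apply, LinearEquiv.coe_coe, hb, map_sum, comm_tmul,
      ← Finset.Nat.sum_antidiagonal_eq_sum_range_succ (fun i j => b i ⊗ₜ[R] b j)]
    exact Finset.Nat.sum_antidiagonal_swap (f := fun p => b p.1 ⊗ₜ[R] b p.2)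

namespace IsSymmetricAlgebraUniv

variable {R Φ P : Type} [CommRing R] [AddCommGroup Φ] [Module R Φ] [CommRing P] [Algebra R P]
  {ιP : Φ →ₗ[R] P} {B : Type} [CommRing B] [Algebra R B]

lemma exists_algHom (hP : IsSymmetricAlgebraUniv R Φ P ιP) (g : Φ →ₗ[R] B) :
    ∃ f : P →ₐ[R] B, ∀ x, f (ιP x) = g x :=
  (hP ⟨B⟩ g).exists

lemma algHom_ext (hP : IsSymmetricAlgebraUniv R Φ P ιP) {f g : P →ₐ[R] B}
    (hfg : f.toLinearMap ∘ₗ ιP = g.toLinearMap ∘ₗ ιP) : f = g :=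
  (hP ⟨B⟩ (g.toLinearMap ∘ₗ ιP)).unique (fun x => congr($hfg x)) fun _ => rfl

end IsSymmetricAlgebraUniv

section Measures

variable {R H M B C : Type} [CommRing R] [AddCommGroup H] [Module R H] [Coalgebra R H]
  [CommRing M] [Algebra R M] [CommRing B] [Algebra R B] [CommRing C] [Algebra R C]
  {ψ : H →ₗ[R] M →ₗ[R] B}

lemma Measures.compr₂ (hψ : Measures R H M B ψ) (g : B →ₐ[R] C) :
    Measures R H M C (ψ.compr₂ g.toLinearMap) := by
  refine ⟨fun h => ?_, fun h m n ι t h₁ h₂ hcomul => ?_⟩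
  · simp [hψ.1 h]
  · simp [hψ.2 h m n ι t h₁ h₂ hcomul]

noncomputable def Measures.toConvAlgHom (hψ : Measures R H M B ψ) :
    M →ₐ[R] WithConv (H →ₗ[R] B) :=
  AlgHom.ofLinearMap ((WithConv.linearEquiv R _).symm.toLinearMap ∘ₗ ψ.flip)
    (WithConv.ext <| LinearMap.ext hψ.1)
    fun m n => WithConv.ext <| LinearMap.ext fun h => by
      simpa [(ℛ R h).convMul_apply] using
        hψ.2 h m n _ (ℛ R h).index (ℛ R h).left (ℛ R h).right (ℛ R h).eq.symm

lemma measures_of_convAlgHom (f : M →ₐ[R] WithConv (H →ₗ[R] B)) :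
    Measures R H M B ((WithConv.linearEquiv R _).toLinearMap ∘ₗ f.toLinearMap).flip := by
  refine ⟨fun h => ?_, fun h m n ι t h₁ h₂ hcomul => ?_⟩
  · simp [map_one f]
  · simp [map_mul f, (Coalgebra.Repr.mk t h₁ h₂ hcomul.symm).convMul_apply]

end Measures

section SymmetricAlgebra

variable {R H Φ P B : Type} [CommRing R] [AddCommGroup H] [Module R H] [Coalgebra R H]
  [IsCocomm R H] [AddCommGroup Φ] [Module R Φ] [CommRing P] [Algebra R P] {ιP : Φ →ₗ[R] P}
  [CommRing B] [Algebra R B]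

lemma exists_measures_of_isSymmetricAlgebraUniv (hP : IsSymmetricAlgebraUniv R Φ P ιP)
    (g : H →ₗ[R] Φ →ₗ[R] B) :
    ∃ ψ : H →ₗ[R] P →ₗ[R] B, Measures R H P B ψ ∧ ∀ h x, ψ h (ιP x) = g h x := by
  obtain ⟨f, hf⟩ := hP.exists_algHom ((WithConv.linearEquiv R _).symm.toLinearMap ∘ₗ g.flip)
  exact ⟨_, measures_of_convAlgHom f, fun h x => by simp [hf]⟩

lemma Measures.ext_of_isSymmetricAlgebraUniv (hP : IsSymmetricAlgebraUniv R Φ P ιP)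
    {ψ₁ ψ₂ : H →ₗ[R] P →ₗ[R] B} (hψ₁ : Measures R H P B ψ₁) (hψ₂ : Measures R H P B ψ₂)
    (hψ : ∀ h x, ψ₁ h (ιP x) = ψ₂ h (ιP x)) : ψ₁ = ψ₂ := by
  have hconv : hψ₁.toConvAlgHom = hψ₂.toConvAlgHom :=
    hP.algHom_ext <| LinearMap.ext fun x => WithConv.ext <| LinearMap.ext fun h => hψ h x
  exact LinearMap.ext₂ fun h m => congr($hconv m h)

end SymmetricAlgebra

/-- `φ : H ⊗ M → A` exhibits `A` as the universal measuring algebra `H(M)`. -/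
def IsUniversalMeasuring (R H M A : Type) [CommRing R] [AddCommGroup H] [Module R H]
    [Coalgebra R H] [CommRing M] [Algebra R M] [CommRing A] [Algebra R A]
    (φ : H →ₗ[R] M →ₗ[R] A) : Prop :=
  ∀ (B : CommAlgebraOver R) (ψ : H →ₗ[R] M →ₗ[R] B.carrier),
    Measures R H M B.carrier ψ → ∃! f : A →ₐ[R] B.carrier, ∀ h m, f (φ h m) = ψ h m

namespace IsUniversalMeasuring

variable {R H M A Q : Type} [CommRing R] [AddCommGroup H] [Module R H] [Coalgebra R H]
  [CommRing M] [Algebra R M] [CommRing A] [Algebra R A] [CommRing Q] [Algebra R Q]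
  {φ : H →ₗ[R] M →ₗ[R] A} {ψ : H →ₗ[R] M →ₗ[R] Q}

lemma algHom_ext (hu : IsUniversalMeasuring R H M A φ) (hφ : Measures R H M A φ)
    {f g : A →ₐ[R] Q} (hfg : ∀ h m, f (φ h m) = g (φ h m)) : f = g :=
  (hu ⟨Q⟩ _ (hφ.compr₂ g)).unique hfg fun _ _ => rfl

lemma exists_algEquiv (hu : IsUniversalMeasuring R H M A φ) (hφ : Measures R H M A φ)
    (hv : IsUniversalMeasuring R H M Q ψ) (hψ : Measures R H M Q ψ) :
    ∃ e : A ≃ₐ[R] Q, ∀ h m, e (φ h m) = ψ h m := by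
  obtain ⟨F, hF, -⟩ := hu ⟨Q⟩ ψ hψ
  obtain ⟨G, hG, -⟩ := hv ⟨A⟩ φ hφ
  have hFG : F.comp G = AlgHom.id R Q := hv.algHom_ext hψ fun h m => by simp [hG, hF]
  have hGF : G.comp F = AlgHom.id R A := hu.algHom_ext hφ fun h m => by simp [hF, hG]
  exact ⟨AlgEquiv.ofAlgHom F G hFG hGF, hF⟩

end IsUniversalMeasuring

theorem isUniversalMeasuring_of_isSymmetricAlgebraUniv {R H Φ P Q : Type} [CommRing R]
    [AddCommGroup H] [Module R H] [Coalgebra R H] [IsCocomm R H] [AddCommGroup Φ] [Module R Φ]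
    [CommRing P] [Algebra R P] {ιP : Φ →ₗ[R] P} (hP : IsSymmetricAlgebraUniv R Φ P ιP)
    [CommRing Q] [Algebra R Q] {ιQ : H ⊗[R] Φ →ₗ[R] Q}
    (hQ : IsSymmetricAlgebraUniv R (H ⊗[R] Φ) Q ιQ) {ψ : H →ₗ[R] P →ₗ[R] Q}
    (hψ : Measures R H P Q ψ) (hψι : ∀ h x, ψ h (ιP x) = ιQ (h ⊗ₜ[R] x)) :
    IsUniversalMeasuring R H P Q ψ := by
  intro B ψ' hψ'
  obtain ⟨k, hk⟩ := hQ.exists_algHom (TensorProduct.lift (ψ'.compl₂ ιP))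
  have hkψ : ∀ h x, k (ψ h (ιP x)) = ψ' h (ιP x) := by simp [hψι, hk]
  refine ⟨k, fun h m => ?_, fun k' hk' => hQ.algHom_ext <| TensorProduct.ext' fun h x => ?_⟩
  · exact congr($((hψ.compr₂ k).ext_of_isSymmetricAlgebraUniv hP hψ' hkψ) h m)
  · simpa [← hψι, hk'] using (hkψ h x).symm

theorem measuring_symmetric_algebra_iso_general (R H Φ P Q A : Type) [CommRing R]
    [Ring H] [Bialgebra R H] (bH : Module.Basis ℕ R H)
    (hDcomul : ∀ n : ℕ, comul (R := R) (bH n)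
      = ∑ i ∈ Finset.range (n + 1), bH i ⊗ₜ[R] bH (n - i))
    [AddCommGroup Φ] [Module R Φ]
    -- `P = S*(Φ)`
    [CommRing P] [Algebra R P] (ιP : Φ →ₗ[R] P) (hP : IsSymmetricAlgebraUniv R Φ P ιP)
    -- `Q = S*(H ⊗ Φ)`
    [CommRing Q] [Algebra R Q] (ιQ : H ⊗[R] Φ →ₗ[R] Q)
    (hQ : IsSymmetricAlgebraUniv R (H ⊗[R] Φ) Q ιQ)
    -- `A = H(P)` is the universal measuring algebra of `P`
    [CommRing A] [Algebra R A] (φ : H →ₗ[R] P →ₗ[R] A)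
    (hφ : Measures R H P A φ)
    (huniv : ∀ (B : CommAlgebraOver R) (ψ : H →ₗ[R] P →ₗ[R] B.carrier),
      Measures R H P B.carrier ψ →
      ∃! f : A →ₐ[R] B.carrier, ∀ (h : H) (m : P), f (φ h m) = ψ h m) :
    ∃ e : A ≃ₐ[R] Q, ∀ (h : H) (x : Φ), e (φ h (ιP x)) = ιQ (h ⊗ₜ[R] x) := by
  have := isCocomm_of_comul_basis bH hDcomul
  obtain ⟨ψ, hψ, hψι⟩ := exists_measures_of_isSymmetricAlgebraUniv hP ((mk R H Φ).compr₂ ιQ)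
  obtain ⟨e, he⟩ := IsUniversalMeasuring.exists_algEquiv huniv hφ
    (isUniversalMeasuring_of_isSymmetricAlgebraUniv hP hQ hψ hψι) hψ
  exact ⟨e, fun h x => (he h (ιP x)).trans (hψι h x)⟩

/-- Let `H` be the divided-power bialgebra with basis `D⁽ⁱ⁾`, `i ≥ 0`, where
`D⁽ⁱ⁾D⁽ʲ⁾ = C(i+j,i) D⁽ⁱ⁺ʲ⁾` and `Δ(D⁽ⁱ⁾) = Σⱼ D⁽ʲ⁾ ⊗ D⁽ⁱ⁻ʲ⁾`.  For an
`R`-module `Φ` with symmetric algebra `S*(Φ)`, the universal measuring algebra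
satisfies `H(S*(Φ)) ≅ S*(H ⊗ Φ)`. -/
theorem measuring_symmetric_algebra_iso (R H Φ P Q A : Type) [CommRing R]
    [Ring H] [Bialgebra R H] (bH : Module.Basis ℕ R H)
    (hD0 : bH 0 = 1)
    (hDmul : ∀ i j : ℕ, bH i * bH j = ((i + j).choose i : R) • bH (i + j))
    (hDcomul : ∀ n : ℕ, comul (R := R) (bH n)
      = ∑ i ∈ Finset.range (n + 1), bH i ⊗ₜ[R] bH (n - i))
    (hDcounit : ∀ n : ℕ, counit (R := R) (bH n) = if n = 0 then (1 : R) else 0)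
    [AddCommGroup Φ] [Module R Φ]
    -- `P = S*(Φ)`
    [CommRing P] [Algebra R P] (ιP : Φ →ₗ[R] P) (hP : IsSymmetricAlgebraUniv R Φ P ιP)
    -- `Q = S*(H ⊗ Φ)`
    [CommRing Q] [Algebra R Q] (ιQ : H ⊗[R] Φ →ₗ[R] Q)
    (hQ : IsSymmetricAlgebraUniv R (H ⊗[R] Φ) Q ιQ)
    -- `A = H(P)` is the universal measuring algebra of `P`
    [CommRing A] [Algebra R A] (φ : H →ₗ[R] P →ₗ[R] A)
    (hφ : Measures R H P A φ)
    (huniv : ∀ (B : CommAlgebraOver R) (ψ : H →ₗ[R] P →ₗ[R] B.carrier),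
      Measures R H P B.carrier ψ →
      ∃! f : A →ₐ[R] B.carrier, ∀ (h : H) (m : P), f (φ h m) = ψ h m) :
    ∃ e : A ≃ₐ[R] Q, ∀ (h : H) (x : Φ), e (φ h (ιP x)) = ιQ (h ⊗ₜ[R] x) :=
  measuring_symmetric_algebra_iso_general R H Φ P Q A bH hDcomul ιP hP ιQ hQ φ hφ huniv
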